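/- arXiv:2102.09002 — 3 statements merged into one kernel-verified Lean document; each statement's English description precedes it below -/
import Mathlib

section
/- Let x be a nomination profile with default node t, maximum in-degree h = Δ(x), and AVD winner w. If event A does not hold — that is, if either some node beats every other node, or no node beats every other node and the default node t is not beaten by any node of in-degree h — then d_w(x) ≥ h − 1. -/
open Finset

/-- `deg x S j` is the in-degree of node `j` counting only incoming edges from
nodes in the set `S`, given the nomination profile `x`. -/
def deg {N : Type*} [Fintype N] [DecidableEq N] (x : N → N → Bool) (S : Finset N) (j : N) : ℕ :=
  (S.filter (fun i => x i j)).card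

/-- In-degree of node `j` (no self-votes counted). -/
def indeg {N : Type*} [Fintype N] [DecidableEq N] (x : N → N → Bool) (j : N) : ℕ :=
  deg x (Finset.univ.erase j) j

/-- The maximum in-degree `Δ(x)`. -/
def maxdeg {N : Type*} [Fintype N] [DecidableEq N] (x : N → N → Bool) : ℕ :=
  Finset.univ.sup (indeg x)

/-- `beats x t a b` : node `a` beats node `b` (with default node `t`). -/
def beats {N : Type*} [Fintype N] [DecidableEq N] (x : N → N → Bool) (t a b : N) : Prop :=
  if b = t then deg x (Finset.univ \ {a, t}) a > deg x (Finset.univ \ {a, t}) t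
  else if a = t then deg x (Finset.univ \ {b, t}) t > deg x (Finset.univ \ {b, t}) b
  else deg x (Finset.univ \ {a, b, t}) a > deg x (Finset.univ \ {a, b, t}) b

/-- `a` beats every other node. -/
def beatsAll {N : Type*} [Fintype N] [DecidableEq N] (x : N → N → Bool) (t a : N) : Prop :=
  ∀ b, b ≠ a → beats x t a b

open Classical in
/-- The AVD mechanism with default node `t`. -/
noncomputable def avdWinner {N : Type*} [Fintype N] [DecidableEq N]
    (x : N → N → Bool) (t : N) : N :=
  if h : ∃ a, beatsAll x t a then h.choose else t

lemma deg_mono {N : Type*} [Fintype N] [DecidableEq N] (x : N → N → Bool) {S T : Finset N}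
    (h : S ⊆ T) (j : N) : deg x S j ≤ deg x T j :=
  Finset.card_le_card (Finset.filter_subset_filter _ h)

lemma deg_le_add {N : Type*} [Fintype N] [DecidableEq N] (x : N → N → Bool)
    {S T U : Finset N} (h : T ⊆ S ∪ U) (j : N) : deg x T j ≤ deg x S j + U.card := by
  unfold deg
  calc (T.filter (fun i => x i j)).card
      ≤ ((S.filter (fun i => x i j)) ∪ U).card := by
        apply Finset.card_le_card
        intro i hi
        simp only [Finset.mem_filter, Finset.mem_union] at *
        rcases Finset.mem_union.mp (h hi.1) with h1 | h1
        · exact Or.inl ⟨h1, hi.2⟩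
        · exact Or.inr h1
    _ ≤ _ := Finset.card_union_le _ _

/-- If event `A` does not hold — i.e. either some node beats every other node, or
no node beats every other node and the default node `t` is not beaten by any node of
in-degree `h = Δ(x)` — then the AVD winner `w` satisfies `d_w(x) ≥ h − 1`. -/
theorem stmt_5 {N : Type*} [Fintype N] [DecidableEq N] (x : N → N → Bool) (t : N)
    (hnotA : (∃ a, beatsAll x t a) ∨
      ((¬ ∃ a, beatsAll x t a) ∧
        ∀ i, i ≠ t → indeg x i = maxdeg x → ¬ beats x t i t)) :
    maxdeg x ≤ indeg x (avdWinner x t) + 1 := by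
  rcases hnotA with hex | ⟨hnex, hno⟩
  · -- winner beats all
    have hw : avdWinner x t = hex.choose := by rw [avdWinner, dif_pos hex]
    set w := hex.choose with hwdef
    have hwb : beatsAll x t w := hex.choose_spec
    rw [hw]
    apply Finset.sup_le
    intro k _
    by_cases hkw : k = w
    · subst hkw; omega
    · have hb := hwb k hkw
      unfold beats at hb
      by_cases hkt : k = t
      · rw [hkt] at hb ⊢
        rw [if_pos rfl] at hb
        have h1 : indeg x t ≤ deg x (Finset.univ \ {w, t}) t + ({w} : Finset N).card := by
          apply deg_le_add
          intro i hi
          simp only [Finset.mem_erase, Finset.mem_univ, Finset.mem_union, Finset.mem_sdiff,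
            Finset.mem_insert, Finset.mem_singleton] at *
          tauto
        have h2 : deg x (Finset.univ \ {w, t}) w ≤ indeg x w := by
          apply deg_mono
          intro i hi
          simp only [Finset.mem_sdiff, Finset.mem_insert, Finset.mem_singleton,
            Finset.mem_erase, Finset.mem_univ] at *
          tauto
        simp only [Finset.card_singleton] at h1
        omega
      · by_cases hwt : w = t
        · rw [hwt] at hb ⊢
          rw [if_neg hkt, if_pos rfl] at hb
          have h1 : indeg x k ≤ deg x (Finset.univ \ {k, t}) k + ({t} : Finset N).card := by
            apply deg_le_add
            intro i hi
            simp only [Finset.mem_erase, Finset.mem_univ, Finset.mem_union, Finset.mem_sdiff,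
              Finset.mem_insert, Finset.mem_singleton] at *
            tauto
          have h2 : deg x (Finset.univ \ {k, t}) t ≤ indeg x t := by
            apply deg_mono
            intro i hi
            simp only [Finset.mem_sdiff, Finset.mem_insert, Finset.mem_singleton,
              Finset.mem_erase, Finset.mem_univ] at *
            tauto
          simp only [Finset.card_singleton] at h1
          omega
        · rw [if_neg hkt, if_neg hwt] at hb
          have h1 : indeg x k ≤ deg x (Finset.univ \ {w, k, t}) k + ({w, t} : Finset N).card := by
            apply deg_le_add
            intro i hi
            simp only [Finset.mem_erase, Finset.mem_univ, Finset.mem_union, Finset.mem_sdiff,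
              Finset.mem_insert, Finset.mem_singleton] at *
            tauto
          have h2 : deg x (Finset.univ \ {w, k, t}) w ≤ indeg x w := by
            apply deg_mono
            intro i hi
            simp only [Finset.mem_sdiff, Finset.mem_insert, Finset.mem_singleton,
              Finset.mem_erase, Finset.mem_univ] at *
            tauto
          have hc : ({w, t} : Finset N).card ≤ 2 := by
            apply le_trans (Finset.card_insert_le _ _)
            simp
          omega
  · -- winner is t
    have hw : avdWinner x t = t := by rw [avdWinner, dif_neg hnex]
    rw [hw]
    obtain ⟨k, -, hk⟩ := Finset.exists_mem_eq_sup (Finset.univ : Finset N)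
      ⟨t, Finset.mem_univ t⟩ (indeg x)
    rw [show maxdeg x = indeg x k from hk]
    by_cases hkt : k = t
    · subst hkt; omega
    · have hnb := hno k hkt hk.symm
      unfold beats at hnb
      rw [if_pos rfl] at hnb
      push_neg at hnb
      have h1 : indeg x k ≤ deg x (Finset.univ \ {k, t}) k + ({t} : Finset N).card := by
        apply deg_le_add
        intro i hi
        simp only [Finset.mem_erase, Finset.mem_univ, Finset.mem_union, Finset.mem_sdiff,
          Finset.mem_insert, Finset.mem_singleton] at *
        tauto
      have h2 : deg x (Finset.univ \ {k, t}) t ≤ indeg x t := by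
        apply deg_mono
        intro i hi
        simp only [Finset.mem_sdiff, Finset.mem_insert, Finset.mem_singleton,
          Finset.mem_erase, Finset.mem_univ] at *
        tauto
      simp only [Finset.card_singleton] at h1
      omega
end

section
/- Let x be a nomination profile with default node t and maximum in-degree h = Δ(x), and suppose event A holds. Let i be a node of in-degree h that beats the default node t. Then there exists a node j ∉ {i, t} whose in-degree d_j(x) is equal to h, h−1, or h−2. -/
open Finset

/-- Suppose event `A` holds: no node beats every other node, and `i ≠ t` is a node
of maximum in-degree `h = Δ(x)` that beats the default node `t`. Then there exists
a node `j ∉ {i, t}` whose in-degree is `h`, `h−1`, or `h−2`. -/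
theorem stmt_6 {N : Type*} [Fintype N] [DecidableEq N] (x : N → N → Bool) (t i : N)
    (hnb : ¬ ∃ a, beatsAll x t a) (hit : i ≠ t)
    (hdi : indeg x i = maxdeg x) (hbeats : beats x t i t) :
    ∃ j, j ≠ i ∧ j ≠ t ∧
      (indeg x j = maxdeg x ∨ indeg x j + 1 = maxdeg x ∨ indeg x j + 2 = maxdeg x) := by
  push_neg at hnb
  have hni := hnb i
  rw [beatsAll] at hni
  push_neg at hni
  obtain ⟨b, hbi, hnbeat⟩ := hni
  by_cases hbt : b = t
  · subst hbt; exact absurd hbeats hnbeat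
  refine ⟨b, hbi, hbt, ?_⟩
  have hnbeat' : deg x (univ \ {i, b, t}) i ≤ deg x (univ \ {i, b, t}) b := by
    unfold beats at hnbeat
    rw [if_neg hbt, if_neg hit] at hnbeat
    omega
  have h1 : indeg x b ≤ maxdeg x := Finset.le_sup (Finset.mem_univ b)
  have h2 : deg x (univ \ {i, b, t}) b ≤ indeg x b := by
    apply Finset.card_le_card
    apply Finset.filter_subset_filter
    intro y hy
    simp only [Finset.mem_sdiff, Finset.mem_insert, Finset.mem_singleton] at hy
    simp only [Finset.mem_erase, Finset.mem_univ, and_true]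
    tauto
  have h3 : indeg x i ≤ deg x (univ \ {i, b, t}) i + 2 := by
    have hsub : (Finset.univ.erase i).filter (fun k => x k i) ⊆
        ((univ \ {i, b, t}).filter (fun k => x k i)) ∪ {b, t} := by
      intro y hy
      simp only [Finset.mem_filter, Finset.mem_erase, Finset.mem_univ, true_and] at hy
      by_cases hyb : y = b
      · simp [hyb]
      by_cases hyt : y = t
      · simp [hyt]
      · simp only [Finset.mem_union, Finset.mem_filter, Finset.mem_sdiff, Finset.mem_insert,
          Finset.mem_singleton, Finset.mem_univ, true_and]
        tauto
    calc indeg x i ≤ (((univ \ {i, b, t}).filter (fun k => x k i)) ∪ {b, t}).card :=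
          Finset.card_le_card hsub
      _ ≤ ((univ \ {i, b, t}).filter (fun k => x k i)).card + ({b, t} : Finset N).card :=
          Finset.card_union_le _ _
      _ ≤ deg x (univ \ {i, b, t}) i + 2 := by
          unfold deg
          gcongr
          exact (Finset.card_insert_le _ _).trans (by simp)
  omega
end

section
/- For every n ≥ 80 there exists an opinion poll distribution on a node set of size 2(n+1) — namely, the distribution in which each of the n+1 'original' nodes i independently, for each original node j ≠ i, either sends edges to both j and its copy j' (with probability 1/2) or sends no edge to j and j' (with probability 1/2), while copies cast no votes — such that for every choice of default node t, the AVD mechanism with default t satisfies E[Δ(x) − d_w(x)] ≥ (1/6)·√(n·ln n), where w is the AVD winner; hence AVD has expected additive approximation Ω(√(n·ln n)) on opinion poll instances. -/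
open Finset

/-- Probability of the profile `x` in the a priori popularity model with
popularities `p`. -/
noncomputable def apWeight {N : Type*} [Fintype N] [DecidableEq N]
    (p : N → ℝ) (x : N → N → Bool) : ℝ :=
  ∏ i, ∏ j, if i = j then (if x i j then 0 else 1) else (if x i j then p j else 1 - p j)


/-- The opinion poll distribution of the duplication construction on the node set
`Fin (n+1) ⊕ Fin (n+1)` (`inl` = original nodes, `inr` = their copies): each
original node `i` independently, for each original node `j ≠ i`, either votes for
both `j` and its copy `j'` (with probability `1/2`) or for neither, and copies
cast no votes. `owWeight n x` is the probability of the profile `x`. -/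
noncomputable def owWeight (n : ℕ)
    (x : (Fin (n + 1) ⊕ Fin (n + 1)) → (Fin (n + 1) ⊕ Fin (n + 1)) → Bool) : ℝ :=
  (∏ i : Fin (n + 1),
      if x (Sum.inl i) (Sum.inl i) = false ∧ x (Sum.inl i) (Sum.inr i) = false ∧
          ∀ j : Fin (n + 1), x (Sum.inl i) (Sum.inl j) = x (Sum.inl i) (Sum.inr j)
      then ((1 : ℝ) / 2) ^ n else 0) *
  (∏ i : Fin (n + 1),
      if ∀ j : Fin (n + 1) ⊕ Fin (n + 1), x (Sum.inr i) j = false then (1 : ℝ) else 0)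

/-!
Duplicating every original node makes it tie with its copy in every pairwise comparison, so no
node beats all others and AVD returns the default `t`, whose in-degree is Binomial(n, 1/2) with
mean `n / 2`. The `n` other original nodes receive independent Binomial(n, 1/2) in-degrees; a
lower bound `C(n, k) ≥ (5/4) 2ⁿ / n` at `k ≥ n / 2 + 0.3 √(n ln n)` shows that one of them
reaches `k` with probability at least `5 / 9`. That event does not involve the votes for `t`,
so `E[Δ - d_t] ≥ (5 / 9) · 0.3 √(n ln n) = √(n ln n) / 6`.
-/

lemma two_mul_card_filter_eq_card_of_involution {α : Type*} {A : Finset α} (p : α → Prop)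
    [DecidablePred p] (σ : α → α) (hσA : ∀ a ∈ A, σ a ∈ A) (hσσ : ∀ a, σ (σ a) = a)
    (hpσ : ∀ a, p (σ a) ↔ ¬ p a) : 2 * #(A.filter p) = #A := by
  have hcard : #(A.filter p) = #(A.filter fun a => ¬ p a) :=
    card_nbij' σ σ (fun a ha => by simp_all [(mem_filter.1 ha).2])
      (fun a ha => by simp_all [(mem_filter.1 ha).2]) (fun a _ => hσσ a) (fun a _ => hσσ a)
  rw [two_mul, ← card_filter_add_card_filter_not p (s := A), hcard]

lemma card_filter_card_lt_le {α : Type*} [Fintype α] [DecidableEq α] (k : ℕ) :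
    #(univ.filter fun s : Finset α => #s < k) ≤ 2 ^ Fintype.card α - (Fintype.card α).choose k := by
  have hsub : univ.filter (fun s : Finset α => #s < k) ⊆ univ \ powersetCard k univ := by
    intro s hs
    simp_all [mem_powersetCard, (mem_filter.1 hs).2.ne]
  calc _ ≤ #(univ \ powersetCard k (univ : Finset α)) := card_le_card hsub
    _ = _ := by rw [card_sdiff_of_subset (subset_univ _), card_univ, Fintype.card_finset,
      card_powersetCard, card_univ]

lemma one_sub_pow_mul_one_add_mul_le_one {ρ : ℝ} (hρ₀ : 0 ≤ ρ) (hρ₁ : ρ ≤ 1) (n : ℕ) :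
    (1 - ρ) ^ n * (1 + n * ρ) ≤ 1 :=
  calc (1 - ρ) ^ n * (1 + n * ρ) ≤ (1 - ρ) ^ n * (1 + ρ) ^ n :=
        mul_le_mul_of_nonneg_left (one_add_mul_le_pow (by linarith) n) (by bound)
    _ = (1 - ρ ^ 2) ^ n := by rw [← mul_pow]; ring
    _ ≤ 1 := pow_le_one₀ (by nlinarith) (by nlinarith)

lemma sixteen_pow_le_four_mul_mul_centralBinom_sq {k : ℕ} (hk : 1 ≤ k) :
    16 ^ k ≤ 4 * k * k.centralBinom ^ 2 := by
  induction k, hk using Nat.le_induction with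
  | base => simp [Nat.centralBinom, Nat.choose]
  | succ k hk ih =>
    have hrec := Nat.succ_mul_centralBinom_succ k
    have hsq : 4 * k * (k + 1) ≤ (2 * k + 1) ^ 2 := by nlinarith
    refine Nat.le_of_mul_le_mul_left ?_ (by positivity : 0 < (k + 1) ^ 2)
    calc (k + 1) ^ 2 * 16 ^ (k + 1) = 16 * (k + 1) ^ 2 * 16 ^ k := by ring
      _ ≤ 16 * (k + 1) ^ 2 * (4 * k * k.centralBinom ^ 2) := by gcongr
      _ = 16 * (4 * k * (k + 1)) * (k + 1) * k.centralBinom ^ 2 := by ring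
      _ ≤ 16 * (2 * k + 1) ^ 2 * (k + 1) * k.centralBinom ^ 2 := by gcongr
      _ = (k + 1) ^ 2 * (4 * (k + 1) * (k + 1).centralBinom ^ 2) := by
          rw [show (k + 1) ^ 2 * (4 * (k + 1) * (k + 1).centralBinom ^ 2)
            = 4 * (k + 1) * ((k + 1) * (k + 1).centralBinom) ^ 2 by ring, hrec]
          ring

lemma four_pow_le_two_mul_succ_mul_choose_sq (n : ℕ) :
    4 ^ n ≤ 2 * (n + 1) * n.choose ((n + 1) / 2) ^ 2 := by
  obtain ⟨k, rfl | rfl⟩ := Nat.even_or_odd' n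
  · rcases Nat.eq_zero_or_pos k with rfl | hk
    · simp
    have := sixteen_pow_le_four_mul_mul_centralBinom_sq hk
    rw [show (2 * k + 1) / 2 = k by omega, ← Nat.centralBinom_eq_two_mul_choose, pow_mul]
    calc (4 ^ 2) ^ k ≤ 4 * k * k.centralBinom ^ 2 := this
      _ ≤ _ := Nat.mul_le_mul_right _ (by omega)
  · have := sixteen_pow_le_four_mul_mul_centralBinom_sq (Nat.succ_pos k)
    have hcb : (k + 1).centralBinom = 2 * (2 * k + 1).choose (k + 1) := by
      rw [Nat.centralBinom_eq_two_mul_choose, show 2 * (k + 1) = 2 * k + 1 + 1 by ring,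
        Nat.choose_succ_succ, Nat.choose_symm_half]
      ring
    rw [show (2 * k + 1 + 1) / 2 = k + 1 by omega, pow_succ, pow_mul]
    rw [hcb, pow_succ, mul_pow] at this
    norm_num at this ⊢
    linarith

lemma two_pow_le_sqrt_mul_choose (n : ℕ) :
    (2 : ℝ) ^ n ≤ √(2 * (n + 1)) * n.choose ((n + 1) / 2) := by
  rw [← Real.sqrt_sq (by positivity : (0 : ℝ) ≤ 2 ^ n),
    ← Real.sqrt_sq (by positivity : (0 : ℝ) ≤ n.choose ((n + 1) / 2)),
    ← Real.sqrt_mul (by positivity)]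
  gcongr
  rw [← pow_mul, mul_comm n, pow_mul]
  exact_mod_cast four_pow_le_two_mul_succ_mul_choose_sq n

/-- Going up from `h ≤ (n + 1) / 2`, the ratio `C(n, k + 1) / C(n, k) = (n - k) / (k + 1)` at the
`j`-th step is at least `(A - (j + 1)) / (A + (j + 1))` with `A = (n + 1) / 2`. -/
lemma choose_mul_prod_le_choose {n h r : ℕ} (hh : (h : ℝ) ≤ (n + 1) / 2) (hr : h + r ≤ n)
    (hrA : (r : ℝ) ≤ (n + 1) / 2) :
    n.choose h * ∏ j ∈ range r, (((n + 1) / 2 - (j + 1)) / ((n + 1) / 2 + (j + 1)) : ℝ)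
      ≤ n.choose (h + r) := by
  induction r with
  | zero => simp
  | succ r ih =>
    push_cast at hrA
    set f : ℝ := ((n + 1) / 2 - (r + 1)) / ((n + 1) / 2 + (r + 1))
    have hf₀ : 0 ≤ f := div_nonneg (by linarith) (by positivity)
    have hstep : (n.choose (h + r) : ℝ) * f * (h + r + 1) ≤ n.choose (h + r) * (n - (h + r)) := by
      rw [mul_assoc]
      gcongr
      calc f * (h + r + 1) ≤ f * ((n + 1) / 2 + (r + 1)) :=
            mul_le_mul_of_nonneg_left (by linarith) hf₀
        _ = (n + 1) / 2 - (r + 1) := div_mul_cancel₀ _ (by positivity)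
        _ ≤ n - (h + r) := by linarith
    have hrec : (n.choose (h + r + 1) : ℝ) * (h + r + 1) = n.choose (h + r) * (n - (h + r)) := by
      have := congrArg (Nat.cast : ℕ → ℝ) (Nat.choose_succ_right_eq n (h + r))
      push_cast [Nat.cast_sub (by omega : h + r ≤ n)] at this
      exact this
    rw [prod_range_succ, ← mul_assoc, show h + (r + 1) = h + r + 1 from rfl]
    refine le_of_mul_le_mul_right ?_ (by positivity : (0 : ℝ) < h + r + 1)
    calc _ ≤ (n.choose (h + r) : ℝ) * f * (h + r + 1) := by
          gcongr; exact ih (by omega) (by linarith)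
      _ ≤ _ := hstep.trans hrec.ge

lemma exp_neg_le_prod_div {A : ℝ} {r : ℕ} (hr : r < A) :
    Real.exp (-(r * (r + 1)) / (A - r)) ≤ ∏ j ∈ range r, (A - (j + 1)) / (A + (j + 1)) := by
  have hgauss : ∑ j ∈ range r, (2 * ((j : ℝ) + 1)) = r * (r + 1) := by
    induction r with
    | zero => simp
    | succ r ih => rw [sum_range_succ, ih (by push_cast at hr; linarith)]; push_cast; ring
  have hfactor (j) (hj : j ∈ range r) :
      Real.exp (-(2 * ((j : ℝ) + 1)) / (A - r)) ≤ (A - (j + 1)) / (A + (j + 1)) := by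
    have hjr : (j : ℝ) + 1 ≤ r := by exact_mod_cast mem_range.1 hj
    have hAr : 0 < A - r := by linarith
    set y := 2 * ((j : ℝ) + 1) / (A - r)
    have hy : (A + (j + 1)) / (A - (j + 1)) ≤ 1 + y := by
      rw [div_le_iff₀ (by linarith)]
      have : 2 * ((j : ℝ) + 1) ≤ y * (A - (j + 1)) := by
        rw [div_mul_eq_mul_div, le_div_iff₀ hAr]; gcongr
      linarith
    rw [neg_div, Real.exp_neg, ← one_div, one_div_le (Real.exp_pos _) (by
      apply div_pos <;> linarith), one_div_div]
    linarith [Real.add_one_le_exp y]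
  calc Real.exp (-(r * (r + 1)) / (A - r))
      = ∏ j ∈ range r, Real.exp (-(2 * ((j : ℝ) + 1)) / (A - r)) := by
        rw [← Real.exp_sum, ← sum_div, sum_neg_distrib, hgauss]
    _ ≤ _ := prod_le_prod (fun _ _ => (Real.exp_pos _).le) hfactor

section Numerics

variable {n : ℕ}

lemma log_five_div_four_le : Real.log (5 / 4) ≤ 0.23105 := by
  have := Real.log_le_log (by positivity) (show ((5 : ℝ) / 4) ^ 3 ≤ 2 by norm_num)
  rw [Real.log_pow] at this
  push_cast at this
  linarith [Real.log_two_lt_d9]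

lemma log_ge_of_eighty_le (hn : 80 ≤ n) : 4.3668 ≤ Real.log n := by
  have hpow : (2 : ℝ) ^ 63 ≤ (n : ℝ) ^ 10 :=
    calc (2 : ℝ) ^ 63 ≤ 80 ^ 10 := by norm_num
      _ ≤ (n : ℝ) ^ 10 := by gcongr; exact_mod_cast hn
  have := Real.log_le_log (by positivity) hpow
  rw [Real.log_pow, Real.log_pow] at this
  push_cast at this
  linarith [Real.log_two_gt_d9]

lemma log_le_of_eighty_le (hn : 80 ≤ n) : Real.log n ≤ 0.055 * n := by
  have hn' : (80 : ℝ) ≤ n := by exact_mod_cast hn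
  have hlog80 : Real.log 80 ≤ 4.39 := by
    rw [show (80 : ℝ) = 2 ^ 6 * (5 / 4) by norm_num, Real.log_mul (by positivity) (by norm_num),
      Real.log_pow]
    push_cast
    linarith [Real.log_two_lt_d9, log_five_div_four_le]
  have := Real.log_le_sub_one_of_pos (show 0 < (n : ℝ) / 80 by positivity)
  rw [Real.log_div (by positivity) (by norm_num)] at this
  linarith

lemma log_succ_le_log_add_inv {x : ℝ} (hx : 0 < x) : Real.log (x + 1) ≤ Real.log x + 1 / x := by
  have := Real.log_le_sub_one_of_pos (show 0 < (x + 1) / x by positivity)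
  rw [Real.log_div (by positivity) hx.ne', add_div, div_self hx.ne'] at this
  linarith

lemma sqrt_mul_log_le_of_eighty_le (hn : 80 ≤ n) : √(n * Real.log n) ≤ 0.2346 * n := by
  rw [Real.sqrt_le_left (by positivity)]
  have := log_le_of_eighty_le hn
  have : (0 : ℝ) ≤ n := n.cast_nonneg
  nlinarith

lemma mul_succ_div_le_log_of_eighty_le (hn : 80 ≤ n) {r : ℝ} (hr₀ : 0 ≤ r)
    (hr : r ≤ 3 / 10 * √(n * Real.log n) + 1) :
    r * (r + 1) / ((n + 1) / 2 - r)
      ≤ Real.log n - Real.log (5 / 4) - Real.log (2 * (n + 1)) / 2 := by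
  have hn' : (80 : ℝ) ≤ n := by exact_mod_cast hn
  set x := Real.log n
  set t := √(n * x)
  have hx₁ : 4.3668 ≤ x := log_ge_of_eighty_le hn
  have hx₂ : x ≤ 0.055 * n := log_le_of_eighty_le hn
  have htn : t ≤ 0.2346 * n := sqrt_mul_log_le_of_eighty_le hn
  have ht₀ : 0 ≤ t := Real.sqrt_nonneg _
  have ht2 : t ^ 2 = n * x := Real.sq_sqrt (by positivity)
  have ht₁ : 18.69 ≤ t := by nlinarith
  have hxt : x * t ≤ 0.2346 * t ^ 2 := by nlinarith [mul_self_nonneg (0.2346 * t - x)]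
  set m := 3 / 10 * t with hm
  have hden : 0 < (n : ℝ) / 2 - m - 1 := by linarith
  have hmain : (m + 1) * (m + 2) / ((n : ℝ) / 2 - m - 1) ≤ x / 2 - 0.584 := by
    rw [div_le_iff₀ hden, hm]
    have hnt : 4.3668 * n ≤ t ^ 2 := by rw [ht2]; nlinarith
    have ht : 0.7248 * t ≤ 0.0388 * t ^ 2 := by nlinarith
    nlinarith
  have hlog2 : Real.log (2 * (n + 1)) ≤ 0.6931471808 + x + 0.0125 := by
    rw [Real.log_mul (by norm_num) (by positivity)]
    have := log_succ_le_log_add_inv (show (0 : ℝ) < n by positivity)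
    have : 1 / (n : ℝ) ≤ 0.0125 := by rw [div_le_iff₀ (by positivity)]; linarith
    linarith [Real.log_two_lt_d9]
  calc r * (r + 1) / ((n + 1) / 2 - r) ≤ (m + 1) * (m + 2) / ((n : ℝ) / 2 - m - 1) := by
        apply div_le_div₀ (by positivity) (by nlinarith) hden (by linarith)
    _ ≤ _ := by linarith [log_five_div_four_le]

/-- Start at the central coefficient `C(n, ⌈n/2⌉) ≥ 2ⁿ / √(2(n + 1))` and move up by
`r = ⌈0.3 √(n log n)⌉` steps, losing at most a factor `exp (-r(r + 1) / ((n + 1) / 2 - r))`. -/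
lemma exists_choose_ge_of_eighty_le (hn : 80 ≤ n) :
    ∃ k : ℕ, (n : ℝ) / 2 + 3 / 10 * √(n * Real.log n) ≤ k ∧
      5 / 4 * 2 ^ n ≤ (n * n.choose k : ℝ) := by
  have hn' : (80 : ℝ) ≤ n := by exact_mod_cast hn
  set m := 3 / 10 * √(n * Real.log n) with hm
  set r := ⌈m⌉₊
  set h := (n + 1) / 2
  have hrm : m ≤ r := Nat.le_ceil m
  have hrm₁ : (r : ℝ) ≤ m + 1 := (Nat.ceil_lt_add_one (by positivity)).le
  have hr₁ : (r : ℝ) ≤ 0.07038 * n + 1 := by linarith [sqrt_mul_log_le_of_eighty_le hn]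
  have hh : (h : ℝ) ≤ (n + 1) / 2 := by
    simpa using Nat.cast_div_le (α := ℝ) (m := n + 1) (n := 2)
  have hh₁ : (n : ℝ) / 2 ≤ h := by
    have : n ≤ 2 * h := by omega
    have : (n : ℝ) ≤ 2 * h := by exact_mod_cast this
    linarith
  have hhr : h + r ≤ n := by
    have : ((h + r : ℕ) : ℝ) ≤ n := by push_cast; linarith
    exact_mod_cast this
  have hrA : (r : ℝ) < (n + 1) / 2 := by linarith
  set E := (r : ℝ) * (r + 1) / ((n + 1) / 2 - r)
  have hE : 5 / 4 * √(2 * (n + 1)) ≤ n * Real.exp (-E) := by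
    have hlog : Real.log (5 / 4 * √(2 * (n + 1)))
        = Real.log (5 / 4) + Real.log (2 * (n + 1)) / 2 := by
      rw [Real.log_mul (by norm_num) (by positivity), Real.log_sqrt (by positivity)]
    calc 5 / 4 * √(2 * (n + 1)) = Real.exp (Real.log (5 / 4) + Real.log (2 * (n + 1)) / 2) := by
          rw [← hlog, Real.exp_log (by positivity)]
      _ ≤ Real.exp (Real.log n - E) := by
          rw [Real.exp_le_exp]
          linarith [mul_succ_div_le_log_of_eighty_le hn r.cast_nonneg hrm₁]
      _ = n * Real.exp (-E) := by
          rw [sub_eq_add_neg, Real.exp_add, Real.exp_log (by positivity)]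
  refine ⟨h + r, by push_cast; linarith, ?_⟩
  calc 5 / 4 * 2 ^ n ≤ 5 / 4 * √(2 * (n + 1)) * n.choose h := by
        rw [mul_assoc]; gcongr; exact two_pow_le_sqrt_mul_choose n
    _ ≤ n * Real.exp (-E) * n.choose h := by gcongr
    _ ≤ n * (n.choose h *
          ∏ j ∈ range r, (((n + 1) / 2 - (j + 1)) / ((n + 1) / 2 + (j + 1)) : ℝ)) := by
        rw [mul_assoc, mul_comm (Real.exp _)]
        gcongr
        simpa only [neg_div] using exp_neg_le_prod_div hrA
    _ ≤ n * n.choose (h + r) := by gcongr; exact choose_mul_prod_le_choose hh hhr hrA.le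

end Numerics

namespace AVD

variable {n : ℕ}

/-- `w j` is the set of original nodes voting for the original node `j`, hence also for its copy:
these are exactly the profiles in the support of `owWeight n`, each of probability `2^(-n(n+1))`. -/
abbrev Votes (n : ℕ) := ∀ j : Fin (n + 1), Finset {i : Fin (n + 1) // i ≠ j}

def Votes.toProfile (w : Votes n) : Fin (n + 1) ⊕ Fin (n + 1) → Fin (n + 1) ⊕ Fin (n + 1) → Bool
  | .inl i, .inl j | .inl i, .inr j => if h : i ≠ j then decide (⟨i, h⟩ ∈ w j) else false
  | .inr _, _ => false

def Votes.ofProfile (x : Fin (n + 1) ⊕ Fin (n + 1) → Fin (n + 1) ⊕ Fin (n + 1) → Bool) :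
    Votes n :=
  fun j => univ.filter fun i => x (.inl i.1) (.inl j)

lemma Votes.toProfile_swap (w : Votes n) (k a : Fin (n + 1) ⊕ Fin (n + 1)) :
    w.toProfile k a.swap = w.toProfile k a := by
  rcases k with _ | _ <;> rcases a with _ | _ <;> rfl

lemma Votes.deg_toProfile_swap (w : Votes n) (S : Finset (Fin (n + 1) ⊕ Fin (n + 1)))
    (a : Fin (n + 1) ⊕ Fin (n + 1)) : deg w.toProfile S a.swap = deg w.toProfile S a := by
  simp only [deg, toProfile_swap]

/-- Since a node and its copy receive the same votes from every set, neither beats the other,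
so nobody beats everyone and AVD falls back to the default. -/
lemma Votes.avdWinner_toProfile (w : Votes n) (t : Fin (n + 1) ⊕ Fin (n + 1)) :
    avdWinner w.toProfile t = t := by
  have not_beats_swap (a : Fin (n + 1) ⊕ Fin (n + 1)) : ¬ beats w.toProfile t a a.swap := by
    unfold beats
    split_ifs with h₁ h₂
    · simp [← h₁, deg_toProfile_swap]
    · simp [h₂, deg_toProfile_swap]
    · simp [deg_toProfile_swap]
  rw [avdWinner, dif_neg]
  rintro ⟨a, ha⟩
  exact not_beats_swap a (ha a.swap (by cases a <;> simp))

lemma Votes.indeg_toProfile (w : Votes n) (a : Fin (n + 1) ⊕ Fin (n + 1)) :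
    indeg w.toProfile a = #(w (a.elim id id)) := by
  rw [indeg, deg, ← card_map (.trans (.subtype _) .inl)]
  congr 1
  ext k
  rcases k with i | i
  · by_cases h : i = a.elim id id
    · subst h; rcases a with _ | _ <;> simp [toProfile]
    · rcases a with _ | _ <;> simp_all [toProfile]
  · simp [toProfile]

lemma Votes.maxdeg_toProfile (w : Votes n) : maxdeg w.toProfile = univ.sup fun j => #(w j) := by
  refine le_antisymm (Finset.sup_le fun a _ => ?_) (Finset.sup_le fun j _ => ?_)
  · rw [indeg_toProfile]
    exact le_sup (f := fun j => #(w j)) (mem_univ _)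
  · exact (indeg_toProfile w (.inl j)).symm.trans_le
      (le_sup (f := indeg w.toProfile) (mem_univ (Sum.inl j)))

lemma Votes.ofProfile_toProfile (w : Votes n) : ofProfile w.toProfile = w := by
  ext j i
  simp [ofProfile, toProfile, i.2]

lemma owWeight_toProfile (w : Votes n) : owWeight n w.toProfile = (1 / 2) ^ (n * (n + 1)) := by
  have hinl (i : Fin (n + 1)) : w.toProfile (.inl i) (.inl i) = false ∧
      w.toProfile (.inl i) (.inr i) = false ∧
      ∀ j, w.toProfile (.inl i) (.inl j) = w.toProfile (.inl i) (.inr j) := by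
    simp [Votes.toProfile]
  have hinr (i : Fin (n + 1)) : ∀ a, w.toProfile (.inr i) a = false := fun _ => rfl
  simp only [owWeight, hinl, hinr, and_self, implies_true, if_true, prod_const, card_univ,
    Fintype.card_fin, one_pow, mul_one, ← pow_mul, mul_comm n]

lemma Votes.toProfile_ofProfile {x : Fin (n + 1) ⊕ Fin (n + 1) → Fin (n + 1) ⊕ Fin (n + 1) → Bool}
    (hx : owWeight n x ≠ 0) : (ofProfile x).toProfile = x := by
  obtain ⟨hinl, hinr⟩ := mul_ne_zero_iff.mp hx
  simp only [prod_ne_zero_iff, mem_univ, ne_eq, ite_eq_right_iff, not_forall, forall_const]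
    at hinl hinr
  funext a b
  rcases a with i | i
  · obtain ⟨hself, hself', hcopy⟩ := (hinl i).1
    rcases b with j | j <;> by_cases h : i = j <;> simp_all [toProfile, ofProfile]
  · simp [toProfile, (hinr i).1]

lemma sum_owWeight_mul (g : (Fin (n + 1) ⊕ Fin (n + 1) → Fin (n + 1) ⊕ Fin (n + 1) → Bool) → ℝ) :
    ∑ x, owWeight n x * g x = (1 / 2) ^ (n * (n + 1)) * ∑ w : Votes n, g w.toProfile := by
  rw [mul_sum]
  symm
  refine sum_of_injOn Votes.toProfile ?_ (fun _ _ => mem_univ _) ?_ ?_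
  · exact fun w _ w' _ h => by rw [← w.ofProfile_toProfile, h, w'.ofProfile_toProfile]
  · intro x _ hx
    by_contra hne
    exact hx ⟨_, mem_coe.2 (mem_univ _), Votes.toProfile_ofProfile (left_ne_zero_of_mul hne)⟩
  · intro w _
    rw [owWeight_toProfile]

/-- Flipping the single vote of `i` for `τ` is an involution of `A` that toggles `i ∈ w τ`. -/
lemma two_mul_sum_card_eq (τ : Fin (n + 1)) (A : Finset (Votes n))
    (hA : ∀ w ∈ A, ∀ s, Function.update w τ s ∈ A) :
    2 * ∑ w ∈ A, #(w τ) = n * #A := by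
  have hflip (i : {i // i ≠ τ}) : 2 * #(A.filter fun w => i ∈ w τ) = #A := by
    refine two_mul_card_filter_eq_card_of_involution _
      (fun w => Function.update w τ (symmDiff (w τ) {i})) (fun w hw => hA w hw _) ?_ ?_
    · intro w
      simp [Function.update_idem, symmDiff_symmDiff_cancel_right]
    · intro w
      simp [mem_symmDiff]
  calc 2 * ∑ w ∈ A, #(w τ)
      = 2 * ∑ i, #(A.filter fun w => i ∈ w τ) := by
        simpa [bipartiteAbove, bipartiteBelow] using
          sum_card_bipartiteAbove_eq_sum_card_bipartiteBelow (s := A) (t := univ)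
            (fun w i => i ∈ w τ)
    _ = n * #A := by simp [mul_sum, hflip]

lemma card_forall_card_lt_le (τ : Fin (n + 1)) (k : ℕ) :
    #(univ.filter fun w : Votes n => ∀ j ≠ τ, #(w j) < k) ≤ 2 ^ n * (2 ^ n - n.choose k) ^ n := by
  let S (j : Fin (n + 1)) : Finset (Finset {i // i ≠ j}) :=
    if j = τ then univ else univ.filter (#· < k)
  have hS : univ.filter (fun w : Votes n => ∀ j ≠ τ, #(w j) < k) = Fintype.piFinset S := by
    ext w
    simp only [mem_filter, mem_univ, true_and, Fintype.mem_piFinset, S]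
    refine forall_congr' fun j => ?_
    by_cases hj : j = τ <;> simp [hj]
  have hSτ : #(S τ) = 2 ^ n := by simp [S]
  have hSj (j) (hj : j ∈ univ.erase τ) : #(S j) ≤ 2 ^ n - n.choose k := by
    simpa [S, (mem_erase.1 hj).1] using card_filter_card_lt_le (α := {i // i ≠ j}) k
  rw [hS, Fintype.card_piFinset, ← mul_prod_erase _ _ (mem_univ τ), hSτ]
  gcongr
  calc ∏ j ∈ univ.erase τ, #(S j) ≤ ∏ j ∈ univ.erase τ, (2 ^ n - n.choose k) := prod_le_prod' hSj
    _ = (2 ^ n - n.choose k) ^ n := by simp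

lemma card_votes : Fintype.card (Votes n) = 2 ^ (n * (n + 1)) := by
  simp [Fintype.card_pi, pow_mul]

/-- With `ρ = C(n, k) / 2ⁿ`, the probability that no `j ≠ τ` gets `k` votes is
`(1 - ρ)ⁿ ≤ 1 / (1 + nρ) ≤ 4 / 9`. -/
lemma card_exists_card_ge (τ : Fin (n + 1)) {k : ℕ} (hk : 5 / 4 * 2 ^ n ≤ (n * n.choose k : ℝ)) :
    5 / 9 * 2 ^ (n * (n + 1)) ≤ (#(univ.filter fun w : Votes n => ∃ j ≠ τ, k ≤ #(w j)) : ℝ) := by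
  set ρ : ℝ := n.choose k / 2 ^ n with hρ
  have hchoose : n.choose k ≤ 2 ^ n := Nat.choose_le_two_pow n k
  have hρ₀ : 0 ≤ ρ := by positivity
  have hρ₁ : ρ ≤ 1 := by rw [hρ, div_le_one (by positivity)]; exact_mod_cast hchoose
  have hnρ : 5 / 4 ≤ n * ρ := by
    rw [hρ, ← mul_div_assoc, le_div_iff₀ (by positivity)]; exact hk
  have hpow : (1 - ρ) ^ n ≤ 4 / 9 := by
    have := one_sub_pow_mul_one_add_mul_le_one hρ₀ hρ₁ n
    nlinarith [pow_nonneg (sub_nonneg.2 hρ₁) n]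
  have hcompl : (#(univ.filter fun w : Votes n => ∀ j ≠ τ, #(w j) < k) : ℝ)
      ≤ 4 / 9 * 2 ^ (n * (n + 1)) :=
    calc _ ≤ ((2 ^ n * (2 ^ n - n.choose k) ^ n : ℕ) : ℝ) := by
          exact_mod_cast card_forall_card_lt_le τ k
      _ = (1 - ρ) ^ n * 2 ^ (n * (n + 1)) := by
          have : (2 : ℝ) ^ n - n.choose k = (1 - ρ) * 2 ^ n := by rw [hρ]; field_simp
          push_cast [hchoose]
          rw [this, mul_pow, ← pow_mul, mul_add, mul_one, pow_add]
          ring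
      _ ≤ 4 / 9 * 2 ^ (n * (n + 1)) := by gcongr
  have hsplit := card_filter_add_card_filter_not (s := (univ : Finset (Votes n)))
    (fun w => ∃ j ≠ τ, k ≤ #(w j))
  simp only [not_exists, not_and, not_le, card_univ, card_votes] at hsplit
  have : ((#(univ.filter fun w : Votes n => ∃ j ≠ τ, k ≤ #(w j)) : ℕ) : ℝ)
      + #(univ.filter fun w : Votes n => ∀ j ≠ τ, #(w j) < k) = 2 ^ (n * (n + 1)) := by
    exact_mod_cast hsplit
  linarith

/-- On the event that some `j ≠ τ` gets at least `k` votes, the maximum is at least `k`; the event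
does not depend on the votes for `τ`, which there still average `n / 2`. -/
lemma sum_sup_sub_card_ge (τ : Fin (n + 1)) {k : ℕ} (hk : 5 / 4 * 2 ^ n ≤ (n * n.choose k : ℝ))
    (hkn : (n : ℝ) / 2 ≤ k) :
    2 ^ (n * (n + 1)) * (5 / 9 * (k - n / 2))
      ≤ ∑ w : Votes n, (((univ.sup fun j => #(w j) : ℕ) : ℝ) - #(w τ)) := by
  set A := univ.filter fun w : Votes n => ∃ j ≠ τ, k ≤ #(w j)
  have hA : ∀ w ∈ A, ∀ s, Function.update w τ s ∈ A := by
    intro w hw s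
    obtain ⟨j, hjτ, hj⟩ := (mem_filter.1 hw).2
    exact mem_filter.2 ⟨mem_univ _, j, hjτ, by rwa [Function.update_of_ne hjτ]⟩
  have hsum : 2 * (∑ w ∈ A, #(w τ) : ℝ) = n * #A := by exact_mod_cast two_mul_sum_card_eq τ A hA
  calc 2 ^ (n * (n + 1)) * (5 / 9 * (k - n / 2)) ≤ (#A : ℝ) * (k - n / 2) := by
        rw [← mul_assoc, mul_comm _ (5 / 9 : ℝ)]
        have : 0 ≤ (k : ℝ) - n / 2 := by linarith
        gcongr
        exact card_exists_card_ge τ hk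
    _ = ∑ w ∈ A, ((k : ℝ) - #(w τ)) := by
        rw [sum_sub_distrib, sum_const, nsmul_eq_mul]
        linarith
    _ ≤ ∑ w ∈ A, (((univ.sup fun j => #(w j) : ℕ) : ℝ) - #(w τ)) := by
        gcongr with w hw
        obtain ⟨j, -, hj⟩ := (mem_filter.1 hw).2
        exact_mod_cast hj.trans (le_sup (f := fun j => #(w j)) (mem_univ j))
    _ ≤ ∑ w : Votes n, (((univ.sup fun j => #(w j) : ℕ) : ℝ) - #(w τ)) := by
        refine sum_le_sum_of_subset_of_nonneg (subset_univ _) fun w _ _ => ?_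
        exact sub_nonneg.2 (by exact_mod_cast le_sup (f := fun j => #(w j)) (mem_univ τ))

end AVD

/-- For every `n ≥ 80` there is an opinion poll distribution on `2(n+1)` nodes —
namely the duplication construction `owWeight n` — on which, for every choice of
default node `t`, the AVD mechanism has expected additive approximation at least
`(1/6)·√(n·ln n)`; hence AVD is `Ω(√(n·ln n))` on opinion poll instances. -/
theorem stmt_18 (n : ℕ) (hn : 80 ≤ n) (t : Fin (n + 1) ⊕ Fin (n + 1)) :
    (∑ x : (Fin (n + 1) ⊕ Fin (n + 1)) → (Fin (n + 1) ⊕ Fin (n + 1)) → Bool,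
        owWeight n x * ((maxdeg x : ℝ) - (indeg x (avdWinner x t) : ℝ)))
      ≥ (1 / 6) * Real.sqrt ((n : ℝ) * Real.log n) := by
  obtain ⟨k, hk, hchoose⟩ := exists_choose_ge_of_eighty_le hn
  have hsum := AVD.sum_sup_sub_card_ge (t.elim id id) hchoose
    (by linarith [Real.sqrt_nonneg ((n : ℝ) * Real.log n)])
  rw [ge_iff_le, AVD.sum_owWeight_mul]
  simp only [AVD.Votes.avdWinner_toProfile, AVD.Votes.maxdeg_toProfile,
    AVD.Votes.indeg_toProfile]
  calc (1 / 6) * √(n * Real.log n)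
      = (1 / 2) ^ (n * (n + 1)) * (2 ^ (n * (n + 1)) * (5 / 9 * (3 / 10 * √(n * Real.log n)))) := by
        rw [← mul_assoc, ← mul_pow]; norm_num; ring
    _ ≤ (1 / 2) ^ (n * (n + 1)) * (2 ^ (n * (n + 1)) * (5 / 9 * (k - n / 2))) := by
        gcongr; linarith
    _ ≤ _ := by gcongr
end
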